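/- For K ∈ (0,1), the function (t,s) ↦ t^K + s^K - (t+s)^K on [0,∞)² is positive semidefinite, i.e., for all t₁,…,tₙ ≥ 0 and c₁,…,cₙ ∈ ℝ, ∑_{i,j} c_i c_j (t_i^K + t_j^K - (t_i+t_j)^K) ≥ 0. -/

import Mathlib

/-!
For `0 < K < 1` and `t ≥ 0` one has the Lévy–Khintchine type representation
`t ^ K * I = ∫_{x > 0} (1 - e^{-xt}) x^{-1-K} dx` with `I > 0` (substitute `x ↦ x / t`).
Since `1 - e^{-x(a+b)} = (1 - e^{-xa}) + (1 - e^{-xb}) - (1 - e^{-xa})(1 - e^{-xb})`, this gives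
`(a ^ K + b ^ K - (a + b) ^ K) * I = ∫_{x > 0} (1 - e^{-xa})(1 - e^{-xb}) x^{-1-K} dx`,
so the kernel is, up to the factor `I`, a Gram kernel in `L²(x^{-1-K} dx)` and hence positive
semidefinite.
-/

open Real Set Finset MeasureTheory

section GramKernel

variable {ι α : Type*} [MeasurableSpace α] {μ : Measure α}

theorem sum_sum_mul_integral_mul_mul_nonneg (s : Finset ι) (c : ι → ℝ) (f : ι → α → ℝ)
    {w : α → ℝ} (hw : 0 ≤ᵐ[μ] w)
    (hf : ∀ i ∈ s, ∀ j ∈ s, Integrable (fun x ↦ f i x * f j x * w x) μ) :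
    0 ≤ ∑ i ∈ s, ∑ j ∈ s, c i * c j * ∫ x, f i x * f j x * w x ∂μ := by
  have hsum : ∑ i ∈ s, ∑ j ∈ s, c i * c j * ∫ x, f i x * f j x * w x ∂μ
      = ∫ x, (∑ i ∈ s, c i * f i x) ^ 2 * w x ∂μ := calc
    _ = ∑ i ∈ s, ∑ j ∈ s, ∫ x, c i * c j * (f i x * f j x * w x) ∂μ := by
      simp_rw [integral_const_mul]
    _ = ∫ x, ∑ i ∈ s, ∑ j ∈ s, c i * c j * (f i x * f j x * w x) ∂μ := by
      rw [integral_finsetSum _ fun i hi ↦ integrable_finsetSum _ fun j hj ↦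
        (hf i hi j hj).const_mul _]
      exact Finset.sum_congr rfl fun i hi ↦
        (integral_finsetSum _ fun j hj ↦ (hf i hi j hj).const_mul _).symm
    _ = ∫ x, (∑ i ∈ s, c i * f i x) ^ 2 * w x ∂μ := by
      congr 1 with x
      rw [sq, Finset.sum_mul_sum, Finset.sum_mul]
      refine Finset.sum_congr rfl fun i _ ↦ ?_
      rw [Finset.sum_mul]
      exact Finset.sum_congr rfl fun j _ ↦ by ring
  rw [hsum]
  exact integral_nonneg_of_ae (hw.mono fun x hx ↦ mul_nonneg (sq_nonneg _) hx)

end GramKernel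

theorem one_sub_exp_neg_mul_mul_one_sub_exp_neg_mul_mul (x a b w : ℝ) :
    (1 - exp (-(x * a))) * (1 - exp (-(x * b))) * w
      = (1 - exp (-(x * a))) * w + (1 - exp (-(x * b))) * w - (1 - exp (-(x * (a + b)))) * w := by
  rw [mul_add, neg_add, exp_add]
  ring

section FractionalPower

variable {K : ℝ}

theorem integrableOn_one_sub_exp_neg_mul_rpow (hK0 : 0 < K) (hK1 : K < 1) {t : ℝ} (ht : 0 ≤ t) :
    IntegrableOn (fun x ↦ (1 - exp (-(x * t))) * x ^ (-1 - K)) (Ioi 0) := by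
  have hmeas : AEStronglyMeasurable (fun x : ℝ ↦ (1 - exp (-(x * t))) * x ^ (-1 - K)) :=
    (by measurability : Measurable _).aestronglyMeasurable
  have hbound : ∀ x ∈ Ioi (0 : ℝ),
      ‖(1 - exp (-(x * t))) * x ^ (-1 - K)‖ ≤ min (x * t) 1 * x ^ (-1 - K) := by
    intro x (hx : 0 < x)
    have hw : 0 ≤ x ^ (-1 - K) := rpow_nonneg hx.le _
    have hpos : 0 ≤ 1 - exp (-(x * t)) := by
      have := exp_le_one_iff.mpr (neg_nonpos.mpr (mul_nonneg hx.le ht))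
      linarith
    have hle : 1 - exp (-(x * t)) ≤ min (x * t) 1 :=
      le_min (by linarith [one_sub_le_exp_neg (x * t)]) (by linarith [exp_pos (-(x * t))])
    rw [norm_of_nonneg (mul_nonneg hpos hw)]
    gcongr
  rw [← Ioc_union_Ioi_eq_Ioi zero_le_one]
  refine IntegrableOn.union ?_ ?_
  · have hdom : IntegrableOn (fun x : ℝ ↦ t * x ^ (-K)) (Ioc 0 1) :=
      (intervalIntegrable_iff_integrableOn_Ioc_of_le zero_le_one).mp
        ((intervalIntegral.intervalIntegrable_rpow' (r := -K) (by linarith)).const_mul t)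
    refine hdom.mono' hmeas.restrict ((ae_restrict_iff' measurableSet_Ioc).mpr
      (.of_forall fun x hx ↦ (hbound x hx.1).trans ?_))
    calc min (x * t) 1 * x ^ (-1 - K) ≤ x * t * x ^ (-1 - K) := by
          gcongr
          · exact rpow_nonneg hx.1.le _
          · exact min_le_left _ _
      _ = t * x ^ (-K) := by
          rw [show -K = 1 + (-1 - K) by ring, rpow_add hx.1, rpow_one]
          ring
  · refine (integrableOn_Ioi_rpow_of_lt (a := -1 - K) (by linarith) one_pos).mono' hmeas.restrict
      ((ae_restrict_iff' measurableSet_Ioi).mpr (.of_forall fun x (hx : 1 < x) ↦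
        (hbound x (zero_lt_one.trans hx)).trans ?_))
    have := rpow_nonneg (zero_lt_one.trans hx).le (-1 - K)
    nlinarith [min_le_right (x * t) 1]

theorem integral_one_sub_exp_neg_mul_rpow (hK : K ≠ 0) {t : ℝ} (ht : 0 ≤ t) :
    ∫ x in Ioi 0, (1 - exp (-(x * t))) * x ^ (-1 - K)
      = t ^ K * ∫ x in Ioi 0, (1 - exp (-x)) * x ^ (-1 - K) := by
  rcases ht.eq_or_lt with rfl | ht
  · simp [zero_rpow hK]
  have hscale : EqOn (fun x : ℝ ↦ (1 - exp (-(x * t))) * x ^ (-1 - K))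
      (fun x ↦ t ^ (1 + K) * ((1 - exp (-(x * t))) * (x * t) ^ (-1 - K))) (Ioi 0) := by
    intro x (hx : 0 < x)
    have : t ^ (1 + K) * t ^ (-1 - K) = 1 := by rw [← rpow_add ht]; norm_num
    dsimp only
    rw [mul_rpow hx.le ht.le]
    linear_combination (-((1 - exp (-(x * t))) * x ^ (-1 - K))) * this
  rw [setIntegral_congr_fun measurableSet_Ioi hscale, integral_const_mul,
    integral_comp_mul_right_Ioi (fun u ↦ (1 - exp (-u)) * u ^ (-1 - K)) 0 ht, zero_mul,
    smul_eq_mul, ← mul_assoc, ← rpow_neg_one, ← rpow_add ht]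
  norm_num

theorem integral_one_sub_exp_neg_rpow_pos (hK0 : 0 < K) (hK1 : K < 1) :
    0 < ∫ x in Ioi 0, (1 - exp (-x)) * x ^ (-1 - K) := by
  have hint := integrableOn_one_sub_exp_neg_mul_rpow hK0 hK1 zero_le_one
  simp only [mul_one] at hint
  have hpos : ∀ x ∈ Ioi (0 : ℝ), 0 < (1 - exp (-x)) * x ^ (-1 - K) := fun x (hx : 0 < x) ↦
    mul_pos (by linarith [exp_lt_one_iff.mpr (neg_lt_zero.mpr hx)]) (rpow_pos_of_pos hx _)
  rw [setIntegral_pos_iff_support_of_nonneg_ae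
    ((ae_restrict_iff' measurableSet_Ioi).mpr (.of_forall fun x hx ↦ (hpos x hx).le)) hint]
  calc (0 : ENNReal) < volume (Ioi (0 : ℝ)) := by simp
    _ ≤ _ := measure_mono (subset_inter (fun x hx ↦ (hpos x hx).ne') subset_rfl)

theorem integrableOn_one_sub_exp_neg_mul_one_sub_exp_neg_mul_rpow (hK0 : 0 < K) (hK1 : K < 1)
    {a b : ℝ} (ha : 0 ≤ a) (hb : 0 ≤ b) :
    IntegrableOn (fun x ↦ (1 - exp (-(x * a))) * (1 - exp (-(x * b))) * x ^ (-1 - K))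
      (Ioi 0) := by
  simp_rw [one_sub_exp_neg_mul_mul_one_sub_exp_neg_mul_mul]
  exact ((integrableOn_one_sub_exp_neg_mul_rpow hK0 hK1 ha).add
    (integrableOn_one_sub_exp_neg_mul_rpow hK0 hK1 hb)).sub
      (integrableOn_one_sub_exp_neg_mul_rpow hK0 hK1 (add_nonneg ha hb))

theorem integral_one_sub_exp_neg_mul_one_sub_exp_neg_mul_rpow (hK0 : 0 < K) (hK1 : K < 1)
    {a b : ℝ} (ha : 0 ≤ a) (hb : 0 ≤ b) :
    ∫ x in Ioi 0, (1 - exp (-(x * a))) * (1 - exp (-(x * b))) * x ^ (-1 - K)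
      = (a ^ K + b ^ K - (a + b) ^ K) * ∫ x in Ioi 0, (1 - exp (-x)) * x ^ (-1 - K) := by
  have hab := add_nonneg ha hb
  have hint {s : ℝ} (hs : 0 ≤ s) := integrableOn_one_sub_exp_neg_mul_rpow hK0 hK1 hs
  simp_rw [one_sub_exp_neg_mul_mul_one_sub_exp_neg_mul_mul]
  rw [integral_sub ?_ (hint hab), integral_add (hint ha) (hint hb),
    integral_one_sub_exp_neg_mul_rpow hK0.ne' ha, integral_one_sub_exp_neg_mul_rpow hK0.ne' hb,
    integral_one_sub_exp_neg_mul_rpow hK0.ne' hab]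
  · ring
  · exact (hint ha).add (hint hb)

end FractionalPower

theorem kernel_posSemidef (K : ℝ) (hK : K ∈ Set.Ioo (0:ℝ) 1)
    (n : ℕ) (t : Fin n → ℝ) (ht : ∀ i, 0 ≤ t i) (c : Fin n → ℝ) :
    0 ≤ ∑ i, ∑ j, c i * c j * ((t i) ^ K + (t j) ^ K - (t i + t j) ^ K) := by
  obtain ⟨hK0, hK1⟩ := hK
  have hI := integral_one_sub_exp_neg_rpow_pos hK0 hK1
  have hgram : ∀ i j, t i ^ K + t j ^ K - (t i + t j) ^ K
      = (∫ x in Ioi 0, (1 - exp (-(x * t i))) * (1 - exp (-(x * t j))) * x ^ (-1 - K))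
        / ∫ x in Ioi 0, (1 - exp (-x)) * x ^ (-1 - K) := fun i j ↦ by
    rw [integral_one_sub_exp_neg_mul_one_sub_exp_neg_mul_rpow hK0 hK1 (ht i) (ht j),
      mul_div_cancel_right₀ _ hI.ne']
  have hw : 0 ≤ᵐ[volume.restrict (Ioi 0)] fun x : ℝ ↦ x ^ (-1 - K) :=
    (ae_restrict_iff' measurableSet_Ioi).mpr (.of_forall fun x (hx : 0 < x) ↦ rpow_nonneg hx.le _)
  simp_rw [hgram, ← mul_div_assoc, ← Finset.sum_div]
  exact div_nonneg (sum_sum_mul_integral_mul_mul_nonneg _ c _ hw fun i _ j _ ↦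
    integrableOn_one_sub_exp_neg_mul_one_sub_exp_neg_mul_rpow hK0 hK1 (ht i) (ht j)) hI.le
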